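/- arXiv:1401.6061 — 2 statements merged into one kernel-verified Lean document; each statement's English description precedes it below -/
import Mathlib

section
/- For all cardinal numbers λ ≥ 2 and κ ≥ 1: if D(λ,κ) holds, then L(λ, 2^(λ^ℵ0) · κ) holds; that is, if every κ-board Gale–Stewart game GS_λ(A,κ) with A ⊆ ωλ is determined, then ONE has a winning strategy in the Laver game LG(λ, 2^(λ^ℵ0) · κ). -/
/-! By `D(λ, κ)`, ONE wins the κ-board game `GS_λ(S, κ)` for every `S` in which TWO has no
winning strategy in `GS_λ(S)` (a winning strategy of TWO on κ boards would also win on a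
single board). There are at most `2^(λ^ℵ₀)` such sets `S`, so ONE can split the
`2^(λ^ℵ₀) · κ` boards of the Laver game into disjoint blocks of κ boards, one for each `S`,
and play the winning strategy for `S` on its block. -/

open Cardinal Set

namespace GamePaper

universe u

/-! ### Gale–Stewart style games.
A play is a sequence `p : ℕ → M`; player ONE (resp. White) moves at even indices,
player TWO (resp. Black) at odd indices.  A strategy for a player is a function
assigning to the finite sequence of the opponent's prior moves the player's next move. -/

/-- ONE's moves in the play `p` are obtained from the strategy `σ` applied to the
list of TWO's prior moves. -/
def OneFollows {M : Type*} (σ : List M → M) (p : ℕ → M) : Prop :=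
  ∀ n : ℕ, p (2 * n) = σ (List.ofFn fun i : Fin n => p (2 * (i : ℕ) + 1))

/-- TWO's moves in the play `p` are obtained from the strategy `σ` applied to the
list of ONE's prior moves. -/
def TwoFollows {M : Type*} (σ : List M → M) (p : ℕ → M) : Prop :=
  ∀ n : ℕ, p (2 * n + 1) = σ (List.ofFn fun i : Fin (n + 1) => p (2 * (i : ℕ)))

/-- ONE has a winning strategy in the Gale–Stewart game `GS_Λ(A)`. -/
def OneWinsGS {Λ : Type*} (A : Set (ℕ → Λ)) : Prop :=
  ∃ σ : List Λ → Λ, ∀ p : ℕ → Λ, OneFollows σ p → p ∈ A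

/-- TWO has a winning strategy in the Gale–Stewart game `GS_Λ(A)`. -/
def TwoWinsGS {Λ : Type*} (A : Set (ℕ → Λ)) : Prop :=
  ∃ σ : List Λ → Λ, ∀ p : ℕ → Λ, TwoFollows σ p → p ∉ A

/-- ONE has a winning strategy in the multiboard game `GS_Λ(A, K)`:
moves are functions `K → Λ`, and ONE wins a play if on some board `ξ` the induced
play belongs to `A`. -/
def OneWinsGSBoards (Λ K : Type*) (A : Set (ℕ → Λ)) : Prop :=
  ∃ σ : List (K → Λ) → K → Λ, ∀ q : ℕ → K → Λ, OneFollows σ q →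
    ∃ ξ : K, (fun n => q n ξ) ∈ A

/-- TWO has a winning strategy in the multiboard game `GS_Λ(A, K)`. -/
def TwoWinsGSBoards (Λ K : Type*) (A : Set (ℕ → Λ)) : Prop :=
  ∃ σ : List (K → Λ) → K → Λ, ∀ q : ℕ → K → Λ, TwoFollows σ q →
    ∀ ξ : K, (fun n => q n ξ) ∉ A

/-- The multiboard Gale–Stewart game `GS_Λ(A, K)` is determined. -/
def GSBoardsDetermined (Λ K : Type*) (A : Set (ℕ → Λ)) : Prop :=
  OneWinsGSBoards Λ K A ∨ TwoWinsGSBoards Λ K A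

/-- `D(λ, κ)` : every multiboard Gale–Stewart game on `κ` boards with moves in `λ`
is determined. -/
def DProp (Λ K : Type*) : Prop :=
  ∀ A : Set (ℕ → Λ), GSBoardsDetermined Λ K A

/-! ### Laver games -/

/-- ONE wins the play `q` of the Laver game `LG(Λ, K)`. -/
def LaverWin (Λ K : Type*) (q : ℕ → K → Λ) : Prop :=
  ∀ S : Set (ℕ → Λ), ¬ TwoWinsGS S → ∃ ξ : K, (fun n => q n ξ) ∈ S

/-- `L(λ, κ)` : ONE has a winning strategy in the Laver game `LG(Λ, K)`. -/
def OneWinsLG (Λ K : Type*) : Prop :=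
  ∃ σ : List (K → Λ) → K → Λ, ∀ q : ℕ → K → Λ, OneFollows σ q → LaverWin Λ K q

/-- TWO has a winning strategy in the Laver game `LG(Λ, K)`. -/
def TwoWinsLG (Λ K : Type*) : Prop :=
  ∃ σ : List (K → Λ) → K → Λ, ∀ q : ℕ → K → Λ, TwoFollows σ q → ¬ LaverWin Λ K q

/-! ### Ulam's cut-and-choose games `UG(λ, κ)`.
White first chooses `f 0 : K → Λ`; thereafter Black chooses `(ξ (2n), f (2n+1))` and
White responds with `(ξ (2n+1), f (2n+2))`.  White wins iff for some `α : K`,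
`f n α = ξ n` for all `n`. -/

/-- A strategy for White in `UG(Λ, K)`: a first move, and a response to each finite
sequence of Black's prior moves. -/
structure UGWhiteStrategy (Λ K : Type*) where
  first : K → Λ
  move : List (Λ × (K → Λ)) → Λ × (K → Λ)

/-- White's moves in the play `(ξ, f)` of `UG(Λ, K)` follow the strategy `σ`. -/
def UGWhiteFollows {Λ K : Type*} (σ : UGWhiteStrategy Λ K) (ξ : ℕ → Λ) (f : ℕ → K → Λ) :
    Prop :=
  f 0 = σ.first ∧
  ∀ n : ℕ, (ξ (2 * n + 1), f (2 * n + 2)) =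
    σ.move (List.ofFn fun i : Fin (n + 1) => (ξ (2 * (i : ℕ)), f (2 * (i : ℕ) + 1)))

/-- `U(λ, κ)` : White has a winning strategy in the cut-and-choose game `UG(Λ, K)`. -/
def WhiteWinsUG (Λ K : Type*) : Prop :=
  ∃ σ : UGWhiteStrategy Λ K, ∀ (ξ : ℕ → Λ) (f : ℕ → K → Λ),
    UGWhiteFollows σ ξ f → ∃ α : K, ∀ n : ℕ, f n α = ξ n

/-! ### Ideals and the game `G(J)` -/

/-- `J` is an ideal of subsets: nonempty, closed under binary unions and subsets. -/
def IsIdeal {S : Type*} (J : Set (Set S)) : Prop :=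
  J.Nonempty ∧ (∀ A B : Set S, A ∈ J → B ∈ J → A ∪ B ∈ J) ∧
    ∀ A B : Set S, B ∈ J → A ⊆ B → A ∈ J

/-- `J` is atomless: every `J`-positive set splits into two disjoint `J`-positive sets. -/
def IsAtomless {S : Type*} (J : Set (Set S)) : Prop :=
  ∀ X : Set S, X ∉ J → ∃ A B : Set S, A ∪ B = X ∧ Disjoint A B ∧ A ∉ J ∧ B ∉ J

/-- Legality of White's `n`-th move in the game `G(J)` (White plays `W n`,
Black plays `B n`). -/
def GJWhiteLegal {S : Type*} (J : Set (Set S)) (W B : ℕ → Set S) : ℕ → Prop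
  | 0 => W 0 ∉ J
  | n + 1 => W (n + 1) ∉ J ∧ W (n + 1) ⊆ B n

/-- Legality of Black's `n`-th move in the game `G(J)`. -/
def GJBlackLegal {S : Type*} (J : Set (Set S)) (W B : ℕ → Set S) (n : ℕ) : Prop :=
  B n ∉ J ∧ B n ⊆ W n

/-- Black has a winning strategy in the game `G(J)`: a strategy `τ` such that in any
play in which Black follows `τ`, Black's moves are legal as long as White's have been,
and if White always moves legally then `⋂ n, B n` is nonempty. -/
def BlackWinsGJ {S : Type*} (J : Set (Set S)) : Prop :=
  ∃ τ : List (Set S) → Set S,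
    ∀ W B : ℕ → Set S,
      (∀ n : ℕ, B n = τ (List.ofFn fun i : Fin (n + 1) => W (i : ℕ))) →
      (∀ n : ℕ, (∀ k ≤ n, GJWhiteLegal J W B k) → GJBlackLegal J W B n) ∧
      ((∀ n : ℕ, GJWhiteLegal J W B n) → (⋂ n, B n).Nonempty)

/-- The ideal `J` on `K` witnesses `I(λ, κ)`: it is a proper free ideal, `λ⁺`-complete,
every positive set has a partition into `λ` many disjoint positive sets, and there is a
dense family in `J⁺` closed under countable descending intersections (nonempty). -/
def IdealWitness (Λ K : Type*) (J : Set (Set K)) : Prop :=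
  IsIdeal J ∧ J ≠ Set.univ ∧ ⋃₀ J = Set.univ ∧
  (∀ A : Λ → Set K, (∀ i, A i ∈ J) → (⋃ i, A i) ∈ J) ∧
  (∀ X : Set K, X ∉ J → ∃ P : Λ → Set K, (⋃ i, P i) = X ∧
      (∀ i j : Λ, i ≠ j → Disjoint (P i) (P j)) ∧ ∀ i, P i ∉ J) ∧
  ∃ F : Set (Set K), (∀ Y ∈ F, Y ∉ J) ∧ (∀ X : Set K, X ∉ J → ∃ Y ∈ F, Y ⊆ X) ∧
    ∀ Xs : ℕ → Set K, (∀ n, Xs n ∈ F) → (∀ n, Xs (n + 1) ⊆ Xs n) → (⋂ n, Xs n).Nonempty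

/-- `I(λ, κ)` : some ideal on `K` witnesses the above. -/
def IProp (Λ K : Type*) : Prop := ∃ J : Set (Set K), IdealWitness Λ K J

/-! ### The Banach–Mazur game and box products -/

/-- Legality of White's `n`-th move in the Banach–Mazur game (White plays the sets of
even index of the play `p`). -/
def BMWhiteLegal {X : Type*} [TopologicalSpace X] (p : ℕ → Set X) : ℕ → Prop
  | 0 => IsOpen (p 0) ∧ (p 0).Nonempty
  | n + 1 => IsOpen (p (2 * n + 2)) ∧ (p (2 * n + 2)).Nonempty ∧ p (2 * n + 2) ⊆ p (2 * n + 1)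

/-- Legality of Black's `n`-th move in the Banach–Mazur game. -/
def BMBlackLegal {X : Type*} [TopologicalSpace X] (p : ℕ → Set X) (n : ℕ) : Prop :=
  IsOpen (p (2 * n + 1)) ∧ (p (2 * n + 1)).Nonempty ∧ p (2 * n + 1) ⊆ p (2 * n)

/-- Black has a winning strategy in the Banach–Mazur game `BM(X)`: a strategy `τ` such
that in any play where Black follows `τ`, Black's moves are legal as long as White's
have been, and if White always moves legally then the intersection of the play is
nonempty. -/
def BlackWinsBM (X : Type*) [TopologicalSpace X] : Prop :=
  ∃ τ : List (Set X) → Set X,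
    ∀ p : ℕ → Set X,
      (∀ n : ℕ, p (2 * n + 1) = τ (List.ofFn fun i : Fin (n + 1) => p (2 * (i : ℕ)))) →
      (∀ n : ℕ, (∀ k ≤ n, BMWhiteLegal p k) → BMBlackLegal p n) ∧
      ((∀ n : ℕ, BMWhiteLegal p n) → (⋂ n, p n).Nonempty)

/-- The box product topology on `ι → X`: generated by boxes `∏ i, U i` with all
`U i` open. -/
def boxTopology (ι X : Type*) [TopologicalSpace X] : TopologicalSpace (ι → X) :=
  TopologicalSpace.generateFrom
    {S : Set (ι → X) | ∃ U : ι → Set X, (∀ i, IsOpen (U i)) ∧ S = Set.pi Set.univ U}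

/-- `𝓑` is a π-base for `X`: a family of nonempty open sets such that every nonempty
open set contains a member of the family. -/
def IsPiBase (X : Type*) [TopologicalSpace X] (𝓑 : Set (Set X)) : Prop :=
  (∀ V ∈ 𝓑, IsOpen V ∧ V.Nonempty) ∧
    ∀ U : Set X, IsOpen U → U.Nonempty → ∃ V ∈ 𝓑, V ⊆ U

/-! ### Interlaced sets -/

/-- `A` and `B` are interlaced: both are infinite and for some `k` the increasing
enumerations of `A \ k` and `B \ k` satisfy `a₀ < b₀ < a₁ < b₁ < ⋯`. -/
def Interlaced (A B : Set ℕ) : Prop :=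
  A.Infinite ∧ B.Infinite ∧ ∃ k : ℕ, ∀ n : ℕ,
    Nat.nth (fun m => m ∈ A ∧ k ≤ m) n < Nat.nth (fun m => m ∈ B ∧ k ≤ m) n ∧
    Nat.nth (fun m => m ∈ B ∧ k ≤ m) n < Nat.nth (fun m => m ∈ A ∧ k ≤ m) (n + 1)

/-- `B(x) = {x(2n) + x(2n+1) : n < ω, x(2n) > 0}`. -/
def Bx (x : ℕ → ℕ) : Set ℕ :=
  {m | ∃ n : ℕ, 0 < x (2 * n) ∧ m = x (2 * n) + x (2 * n + 1)}

/-- `Y(𝓑) = {x ∈ ωω : B(x) ∉ 𝓑}`. -/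
def YFam (𝓑 : Set (Set ℕ)) : Set (ℕ → ℕ) := {x | Bx x ∉ 𝓑}

/-- `B^F_i = {F(2n)(i) + F(2n+1)(i) : n < ω, F(2n)(i) > 0}` for a play `F` of `G^ω`. -/
def BF (F : ℕ → ℕ → ℕ) (i : ℕ) : Set ℕ :=
  {m | ∃ n : ℕ, 0 < F (2 * n) i ∧ m = F (2 * n) i + F (2 * n + 1) i}

/-- `D(A,B)` : `A` or `B` is finite, or for each `k` there are `a₁ < a₂ < a₃` in `A \ k`
with no element of `B` strictly between `a₁` and `a₃`. -/
def DRel (A B : Set ℕ) : Prop :=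
  A.Finite ∨ B.Finite ∨ ∀ k : ℕ, ∃ a₁ a₂ a₃ : ℕ,
    a₁ ∈ A ∧ a₂ ∈ A ∧ a₃ ∈ A ∧ k ≤ a₁ ∧ a₁ < a₂ ∧ a₂ < a₃ ∧
    ¬ ∃ b ∈ B, a₁ < b ∧ b < a₃

theorem TwoWinsGSBoards.twoWinsGS {Λ K : Type*} [Nonempty K] {S : Set (ℕ → Λ)}
    (h : TwoWinsGSBoards Λ K S) : TwoWinsGS S := by
  obtain ⟨σ, hσ⟩ := h
  obtain ⟨ξ₀⟩ := ‹Nonempty K›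
  -- TWO pretends ONE repeats each move on every board, and reads the answer off board `ξ₀`.
  refine ⟨fun L => σ (L.map (Function.const K)) ξ₀, fun p hp => ?_⟩
  let reply (m : ℕ) : K → Λ :=
    σ (List.ofFn fun i : Fin (m + 1) => Function.const K (p (2 * i)))
  let q (n : ℕ) : K → Λ := if Even n then Function.const K (p n) else reply (n / 2)
  have q_even (n : ℕ) : q (2 * n) = Function.const K (p (2 * n)) := if_pos (even_two_mul n)
  have q_odd (n : ℕ) : q (2 * n + 1) = reply n := by
    simp only [q, Nat.not_even_two_mul_add_one, if_false]
    congr 1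
    omega
  have hq : TwoFollows σ q := fun n => by simp only [q_odd, q_even, reply]
  have q_board : (fun n => q n ξ₀) = p := by
    funext n
    obtain ⟨m, rfl | rfl⟩ := Nat.even_or_odd' n
    · simp [q_even]
    · simp [q_odd, reply, hp m, List.map_ofFn, Function.comp_def]
  exact q_board ▸ hσ q hq ξ₀

theorem DProp.oneWinsGSBoards {Λ K : Type*} [Nonempty K] (hD : DProp Λ K)
    {S : Set (ℕ → Λ)} (hS : ¬ TwoWinsGS S) : OneWinsGSBoards Λ K S :=
  (hD S).resolve_right fun h => hS h.twoWinsGS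

section BlockStrategy

variable {Λ K K' ι : Type*}

noncomputable def blockStrategy [Nonempty Λ] (σ : ι → List (K → Λ) → K → Λ) (e : ι × K → K')
    (L : List (K' → Λ)) : K' → Λ :=
  Function.extend e (fun x => σ x.1 (L.map fun g => g ∘ e ∘ Prod.mk x.1) x.2)
    fun _ => Classical.arbitrary Λ

theorem OneFollows.restrict_blockStrategy [Nonempty Λ] {σ : ι → List (K → Λ) → K → Λ}
    {e : ι × K → K'} (he : e.Injective) {q : ℕ → K' → Λ}
    (hq : OneFollows (blockStrategy σ e) q) (i : ι) :
    OneFollows (σ i) fun n => q n ∘ e ∘ Prod.mk i := by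
  intro n
  funext ξ
  simp only [Function.comp_apply, hq n, blockStrategy, he.extend_apply, List.map_ofFn]
  rfl

end BlockStrategy

theorem oneWinsLG_of_embedding {Λ K K' : Type*} [Nonempty Λ] [Nonempty K] (hD : DProp Λ K)
    (e : {S : Set (ℕ → Λ) // ¬ TwoWinsGS S} × K ↪ K') : OneWinsLG Λ K' := by
  choose σ hσ using fun S : {S : Set (ℕ → Λ) // ¬ TwoWinsGS S} => hD.oneWinsGSBoards S.2
  refine ⟨blockStrategy σ e, fun q hq S hS => ?_⟩
  obtain ⟨ξ, hξ⟩ := hσ ⟨S, hS⟩ _ (hq.restrict_blockStrategy e.injective ⟨S, hS⟩)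
  exact ⟨e (⟨S, hS⟩, ξ), hξ⟩

theorem mk_set_seq (Λ : Type u) : #(Set (ℕ → Λ)) = 2 ^ (#Λ ^ ℵ₀) := by
  simp [mk_set]

/-- Theorem (paper Thm 8): `D(λ,κ)` implies `L(λ, 2^(λ^ℵ₀) · κ)`. -/
theorem statement_3 (Λ K K' : Type u) (hΛ : 2 ≤ #Λ) (hK : 1 ≤ #K)
    (hK' : #K' = 2 ^ ((#Λ) ^ (ℵ₀ : Cardinal.{u})) * #K)
    (hD : DProp Λ K) : OneWinsLG Λ K' := by
  have : Nonempty Λ := mk_ne_zero_iff.mp (Cardinal.one_le_iff_ne_zero.mp (one_le_two.trans hΛ))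
  have : Nonempty K := mk_ne_zero_iff.mp (Cardinal.one_le_iff_ne_zero.mp hK)
  have hcard : #({S : Set (ℕ → Λ) // ¬ TwoWinsGS S} × K) ≤ #K' := by
    rw [hK', mk_prod, lift_id, lift_id, ← mk_set_seq]
    exact mul_le_mul' (mk_subtype_le _) le_rfl
  exact oneWinsLG_of_embedding hD (Classical.choice hcard)

end GamePaper
end

section
/- If White has a winning strategy in the cut-and-choose game UG(2,κ), then κ > 2^ℵ0. -/
open Cardinal Set

namespace GamePaper

universe u

/-! Suppose `#K ≤ 𝔠` and fix an injection `e : K → 2^ℕ` and a function `u : 2^ℕ → 2^ℕ`.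
Black plays arbitrary bits `x n`, each together with a cut that codes, alternately, a bit of
`e α` and a bit of `u (e α)`. A winning `α` must then satisfy `e α = Φ x` and
`u (e α) = Ψ x`, where `Φ x` and `Ψ x` are the bits White declares. Each of them depends on
finitely many of Black's moves, so `Φ` and `Ψ` are continuous, and `Φ` is injective since `α`
recovers `x` from White's cuts. Hence `u ∘ Φ = Ψ`. But there are only `𝔠` such pairs `(Φ, Ψ)`
and each range of `Φ` has size `𝔠`, so choosing distinct points in these ranges by transfinite
recursion produces a `u` that disagrees with every `Ψ ∘ Φ⁻¹` somewhere. -/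

open Function TopologicalSpace

theorem exists_injective_forall_mem {ι α : Type u} (S : ι → Set α)
    (hS : ∀ i, #ι ≤ #(S i)) : ∃ r : ι → α, Injective r ∧ ∀ i, r i ∈ S i := by
  obtain ⟨_, _, hord⟩ := exists_ord_eq_type_lt ι
  have hfresh (i : ι) (g : ∀ j, j < i → α) :
      (S i \ range fun j : Iio i => g j j.2).Nonempty := by
    refine sdiff_nonempty.mpr fun hsub => ?_
    have := (hS i).trans ((mk_le_mk_of_subset hsub).trans mk_range_le)
    exact this.not_gt (mk_Iio_lt i hord)
  let r : ι → α := wellFounded_lt.fix fun i g => (hfresh i g).some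
  have hr (i : ι) : r i ∈ S i \ range fun j : Iio i => r j := by
    rw [show r i = _ from wellFounded_lt.fix_eq _ i]
    exact (hfresh i fun j _ => r j).some_mem
  refine ⟨r, fun i j hij => ?_, fun i => (hr i).1⟩
  by_contra hne
  rcases lt_or_gt_of_ne hne with h | h
  · exact (hr j).2 ⟨⟨i, h⟩, hij⟩
  · exact (hr i).2 ⟨⟨j, h⟩, hij.symm⟩

theorem exists_forall_ne_comp {α β γ : Type u} [Nontrivial γ] (P : Set ((α → β) × (α → γ)))
    (hP : #P ≤ #α) (hinj : ∀ p ∈ P, Injective p.1) : ∃ u : β → γ, ∀ p ∈ P, p.2 ≠ u ∘ p.1 := by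
  obtain ⟨r, hr, hrange⟩ := exists_injective_forall_mem (fun p : P => range p.1.1) fun p => by
    rwa [mk_range_eq _ (hinj p p.2)]
  choose x hx using hrange
  choose v hv using fun p : P => exists_ne (p.1.2 (x p))
  refine ⟨extend r v fun _ => Classical.arbitrary γ, fun p hp hcomp => hv ⟨p, hp⟩ ?_⟩
  have hxp : p.1 (x ⟨p, hp⟩) = r ⟨p, hp⟩ := hx ⟨p, hp⟩
  have := congrFun hcomp (x ⟨p, hp⟩)
  rw [comp_apply, hxp, hr.extend_apply] at this
  exact this.symm

theorem mk_subtype_continuous_le {X Y : Type u} [TopologicalSpace X] [SeparableSpace X]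
    [TopologicalSpace Y] [T2Space Y] [Nonempty Y] :
    #{f : X → Y // Continuous f} ≤ #Y ^ ℵ₀ := by
  obtain ⟨D, hDc, hDd⟩ := exists_countable_dense X
  have hrestrict : Injective fun f : {f : X → Y // Continuous f} => fun d : D => f.1 d :=
    fun f g hfg => Subtype.ext (Continuous.ext_on hDd f.2 g.2 fun z hz => congrFun hfg ⟨z, hz⟩)
  calc #{f : X → Y // Continuous f} ≤ #(D → Y) := mk_le_of_injective hrestrict
    _ = #Y ^ #D := (power_def _ _).symm
    _ ≤ #Y ^ ℵ₀ := power_le_power_left (mk_ne_zero Y) hDc.le_aleph0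

theorem mk_subtype_continuous_cantor_le :
    #{f : (ℕ → Fin 2) → ℕ → Fin 2 // Continuous f} ≤ 𝔠 := by
  simpa using mk_subtype_continuous_le (X := ℕ → Fin 2) (Y := ℕ → Fin 2)

theorem exists_forall_continuous_ne_comp : ∃ u : (ℕ → Fin 2) → ℕ → Fin 2,
    ∀ Φ Ψ : (ℕ → Fin 2) → ℕ → Fin 2, Continuous Φ → Injective Φ → Continuous Ψ →
      Ψ ≠ u ∘ Φ := by
  let P : Set (((ℕ → Fin 2) → ℕ → Fin 2) × ((ℕ → Fin 2) → ℕ → Fin 2)) :=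
    {p | Continuous p.1 ∧ Injective p.1 ∧ Continuous p.2}
  have hP : #P ≤ #(ℕ → Fin 2) := calc
    #P ≤ #{p : ((ℕ → Fin 2) → ℕ → Fin 2) × ((ℕ → Fin 2) → ℕ → Fin 2) //
        Continuous p.1 ∧ Continuous p.2} :=
      mk_le_mk_of_subset fun p hp => ⟨hp.1, hp.2.2⟩
    _ = #{f : (ℕ → Fin 2) → ℕ → Fin 2 // Continuous f} ^ 2 := by
      rw [mk_congr Equiv.subtypeProdEquivProd, mk_prod, lift_id, sq]
    _ ≤ 𝔠 ^ 2 := by gcongr; exact mk_subtype_continuous_cantor_le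
    _ = #(ℕ → Fin 2) := by rw [sq, continuum_mul_self]; simp
  obtain ⟨u, hu⟩ := exists_forall_ne_comp P hP fun p hp => hp.2.1
  exact ⟨u, fun Φ Ψ hΦ hΦi hΨ => hu (Φ, Ψ) ⟨hΦ, hΦi, hΨ⟩⟩

def interleave {α : Sort*} (a c : ℕ → α) (n : ℕ) : α :=
  if n % 2 = 0 then a (n / 2) else c (n / 2)

@[simp]
theorem interleave_two_mul {α : Sort*} (a c : ℕ → α) (n : ℕ) : interleave a c (2 * n) = a n := by
  simp [interleave]

@[simp]
theorem interleave_two_mul_add_one {α : Sort*} (a c : ℕ → α) (n : ℕ) :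
    interleave a c (2 * n + 1) = c n := by
  simp [interleave, Nat.add_mod, Nat.add_div]

namespace UGWhiteStrategy

variable {Λ K : Type*} (σ : UGWhiteStrategy Λ K)

def IsWinning : Prop :=
  ∀ (ξ : ℕ → Λ) (f : ℕ → K → Λ), UGWhiteFollows σ ξ f → ∃ α : K, ∀ n : ℕ, f n α = ξ n

/-- In the play where Black's `n`-th move is `b n`, White's moves are
`(ξ (2n+1), f (2n+2)) = reply b n`, and `cut b n = f (2n)`. -/
def reply (b : ℕ → Λ × (K → Λ)) (n : ℕ) : Λ × (K → Λ) :=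
  σ.move (List.ofFn fun i : Fin (n + 1) => b i)

def cut (b : ℕ → Λ × (K → Λ)) : ℕ → K → Λ
  | 0 => σ.first
  | n + 1 => (σ.reply b n).2

theorem follows_interleave_reply (b : ℕ → Λ × (K → Λ)) :
    UGWhiteFollows σ (interleave (fun n => (b n).1) fun n => (σ.reply b n).1)
      (interleave (σ.cut b) fun n => (b n).2) := by
  refine ⟨by simp [interleave, cut], fun n => ?_⟩
  rw [show 2 * n + 2 = 2 * (n + 1) by ring]
  simp [reply, cut]

theorem IsWinning.exists_cut_eq_and_reply_eq {σ : UGWhiteStrategy Λ K} (hσ : σ.IsWinning)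
    (b : ℕ → Λ × (K → Λ)) :
    ∃ α : K, (∀ n, σ.cut b n α = (b n).1) ∧ ∀ n, (b n).2 α = (σ.reply b n).1 := by
  obtain ⟨α, hα⟩ := hσ _ _ (σ.follows_interleave_reply b)
  exact ⟨α, fun n => by simpa using hα (2 * n), fun n => by simpa using hα (2 * n + 1)⟩

theorem reply_congr {b b' : ℕ → Λ × (K → Λ)} {n : ℕ} (h : ∀ i ≤ n, b i = b' i) :
    σ.reply b n = σ.reply b' n := by
  simp only [reply, fun i : Fin (n + 1) => h i (Nat.lt_succ_iff.mp i.2)]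

theorem cut_congr {b b' : ℕ → Λ × (K → Λ)} {n : ℕ} (h : ∀ i < n, b i = b' i) :
    σ.cut b n = σ.cut b' n := by
  cases n with
  | zero => rfl
  | succ n => exact congrArg Prod.snd (σ.reply_congr fun i hi => h i (Nat.lt_succ_of_le hi))

theorem continuous_reply_fst [TopologicalSpace Λ] [DiscreteTopology Λ] (c : ℕ → K → Λ)
    (n : ℕ) : Continuous fun x : ℕ → Λ => (σ.reply (fun i => (x i, c i)) n).1 :=
  (continuous_of_discreteTopology (f := fun y : Fin (n + 1) → Λ =>
    (σ.move (List.ofFn fun i => (y i, c i))).1)).comp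
    (continuous_pi fun i => continuous_apply (i : ℕ))

theorem IsWinning.exists_continuous_injective_comp_eq [TopologicalSpace Λ] [DiscreteTopology Λ]
    {σ : UGWhiteStrategy Λ K} (hσ : σ.IsWinning) {e : K → ℕ → Λ} (he : Injective e)
    (u : (ℕ → Λ) → ℕ → Λ) : ∃ Φ Ψ : (ℕ → Λ) → ℕ → Λ,
      Continuous Φ ∧ Injective Φ ∧ Continuous Ψ ∧ Ψ = u ∘ Φ := by
  let c : ℕ → K → Λ := interleave (fun k α => e α k) fun k α => u (e α) k
  let b (x : ℕ → Λ) (n : ℕ) : Λ × (K → Λ) := (x n, c n)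
  choose α hcut hreply using fun x => hσ.exists_cut_eq_and_reply_eq (b x)
  let Φ (x : ℕ → Λ) (k : ℕ) : Λ := (σ.reply (b x) (2 * k)).1
  let Ψ (x : ℕ → Λ) (k : ℕ) : Λ := (σ.reply (b x) (2 * k + 1)).1
  have hΦ (x : ℕ → Λ) : e (α x) = Φ x := funext fun k => by simpa [b, c] using hreply x (2 * k)
  have hΨ (x : ℕ → Λ) : u (e (α x)) = Ψ x :=
    funext fun k => by simpa [b, c] using hreply x (2 * k + 1)
  refine ⟨Φ, Ψ, continuous_pi fun k => σ.continuous_reply_fst c (2 * k), fun x y hxy => ?_,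
    continuous_pi fun k => σ.continuous_reply_fst c (2 * k + 1),
    funext fun x => by rw [comp_apply, ← hΦ, hΨ]⟩
  have hα : α x = α y := he (by rw [hΦ, hΦ, hxy])
  funext n
  induction n using Nat.strong_induction_on with
  | _ n ih =>
    have hcutxy : σ.cut (b x) n = σ.cut (b y) n := σ.cut_congr fun i hi => by simp [b, ih i hi]
    calc x n = σ.cut (b x) n (α x) := (hcut x n).symm
      _ = σ.cut (b y) n (α y) := by rw [hcutxy, hα]
      _ = y n := hcut y n

end UGWhiteStrategy

/-- Theorem (paper Thm 12): if White has a winning strategy in `UG(2,κ)` then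
`κ > 2^ℵ₀`. -/
theorem statement_7 (K : Type u) (hU : WhiteWinsUG (Fin 2) K) :
    Cardinal.continuum.{u} < #K := by
  obtain ⟨σ, hσ⟩ := hU
  by_contra! hK
  obtain ⟨e⟩ : Nonempty (K ↪ (ℕ → Fin 2)) := lift_mk_le'.mp (by simpa using hK)
  obtain ⟨u, hu⟩ := exists_forall_continuous_ne_comp
  obtain ⟨Φ, Ψ, hΦ, hΦi, hΨ, hΨu⟩ :=
    UGWhiteStrategy.IsWinning.exists_continuous_injective_comp_eq hσ e.injective u
  exact hu Φ Ψ hΦ hΦi hΨ hΨu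

end GamePaper
end
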